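/- arXiv:2004.12879 — 2 statements merged into one kernel-verified Lean document; each statement's English description precedes it below -/
import Mathlib

section
/- Let $\lambda$ be real with $0 < \lambda < 1/2$. Then there exists $\delta > 0$ such that for all real $\theta$ with $|\theta| < \delta$: $\log\left(1 - \left(\tfrac{1}{2}+\lambda\right)\left(1 - e^{-\mathrm{i}\theta}\right)\right) = -\mathrm{i}\theta + \overline{\log\left(1 - \left(\tfrac{1}{2}-\lambda\right)\left(1 - e^{-\mathrm{i}\theta}\right)\right)}$, where $\log$ denotes the principal complex logarithm and the bar denotes complex conjugation. -/
/-!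
Since `conj (exp (-iθ)) = exp (iθ)`, the upwind amplification factor satisfies
`S(θ, 1 - conj c) = exp (-iθ) · conj (S(θ, c))` for every complex `c`. Near `θ = 0` the factor
`S(θ, c)` is close to `1`, so its argument is small; then no branch cut of the principal
logarithm is crossed, and the logarithm of this product is `-iθ + conj (log S(θ, c))`.
-/

open Complex ComplexConjugate Filter Topology Set
open scoped Real

namespace Complex

theorem log_exp_mul {w z : ℂ} (hz : z ≠ 0) (h : w.im + arg z ∈ Ioc (-π) π) :
    log (exp w * z) = w + log z := by
  have him : (w + log z).im = w.im + arg z := by simp [log_im]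
  calc log (exp w * z) = log (exp (w + log z)) := by rw [exp_add, exp_log hz]
    _ = w + log z := log_exp (him ▸ h.1) (him ▸ h.2)

theorem log_exp_mul_conj {w z : ℂ} (hz : z ≠ 0) (hw : |w.im| < π / 2)
    (harg : |arg z| < π / 2) : log (exp w * conj z) = w + conj (log z) := by
  have harg_ne : arg z ≠ π := ne_of_lt (by linarith [(abs_lt.mp harg).2, Real.pi_pos])
  have harg_conj : arg (conj z) = -arg z := by rw [arg_conj, if_neg harg_ne]
  have hsum : w.im + arg (conj z) ∈ Ioc (-π) π := by
    rw [harg_conj]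
    constructor <;> linarith [abs_lt.mp hw, abs_lt.mp harg]
  rw [log_exp_mul ((map_ne_zero _).mpr hz) hsum, log_conj z harg_ne]

end Complex

/-- The amplification factor `S(θ, c)` of the upwind Euler scheme for `u_t + u_x = 0`. -/
noncomputable def upwindAmplification (θ : ℝ) (c : ℂ) : ℂ :=
  1 - c * (1 - exp (-I * θ))

theorem upwindAmplification_one_sub_conj (θ : ℝ) (c : ℂ) :
    upwindAmplification θ (1 - conj c) = exp (-I * θ) * conj (upwindAmplification θ c) := by
  have hconj : conj (exp (-I * θ)) = exp (I * θ) := by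
    rw [← exp_conj, map_mul, map_neg, conj_I, conj_ofReal, neg_neg]
  have hinv : exp (-I * θ) * exp (I * θ) = 1 := by rw [← exp_add, neg_mul, neg_add_cancel, exp_zero]
  simp only [upwindAmplification, map_sub, map_mul, map_one, hconj]
  linear_combination (-conj c) * hinv

theorem tendsto_upwindAmplification_nhds_zero (c : ℂ) :
    Tendsto (fun θ : ℝ => upwindAmplification θ c) (𝓝 0) (𝓝 1) := by
  have hcont : Continuous fun θ : ℝ => upwindAmplification θ c := by
    unfold upwindAmplification; fun_prop
  simpa [upwindAmplification] using hcont.tendsto 0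

theorem eventually_log_upwindAmplification_one_sub_conj (c : ℂ) :
    ∀ᶠ θ : ℝ in 𝓝 0, log (upwindAmplification θ (1 - conj c)) =
      -I * θ + conj (log (upwindAmplification θ c)) := by
  have hS := tendsto_upwindAmplification_nhds_zero c
  have harg : Tendsto (fun θ : ℝ => arg (upwindAmplification θ c)) (𝓝 0) (𝓝 0) := by
    simpa [Function.comp_def] using (continuousAt_arg one_mem_slitPlane).tendsto.comp hS
  have hθ : Tendsto (fun θ : ℝ => θ) (𝓝 0) (𝓝 0) := tendsto_id
  have hpi : |(0 : ℝ)| < π / 2 := by simpa using Real.pi_div_two_pos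
  filter_upwards [hS.eventually_ne one_ne_zero,
    harg.abs.eventually (gt_mem_nhds hpi),
    hθ.abs.eventually (gt_mem_nhds hpi)] with θ hne harg_lt hθ_lt
  rw [upwindAmplification_one_sub_conj]
  exact log_exp_mul_conj hne (by simpa using hθ_lt) harg_lt

theorem stmt_14_general (lam : ℝ) :
    ∃ δ : ℝ, 0 < δ ∧ ∀ θ : ℝ, |θ| < δ →
      Complex.log (1 - ((1 / 2 : ℂ) + lam) * (1 - Complex.exp (-Complex.I * θ))) =
        -Complex.I * θ +
          (starRingEnd ℂ)
            (Complex.log (1 - ((1 / 2 : ℂ) - lam) * (1 - Complex.exp (-Complex.I * θ)))) := by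
  obtain ⟨δ, hδ, hsymm⟩ := Metric.eventually_nhds_iff.mp
    (eventually_log_upwindAmplification_one_sub_conj ((1 / 2 : ℂ) - lam))
  have hc : 1 - conj ((1 / 2 : ℂ) - lam) = 1 / 2 + lam := by
    rw [map_sub, conj_ofReal, map_div₀, map_one, map_ofNat]; ring
  refine ⟨δ, hδ, fun θ hθ => ?_⟩
  have h := hsymm (show dist θ 0 < δ by rwa [Real.dist_0_eq_abs])
  rwa [hc] at h

/-- Refined symmetry (Appendix B): for `0 < λ < 1/2` there is `δ > 0` such that for
`|θ| < δ`, `log(1 - (1/2+λ)(1-e^{-iθ})) = -iθ + conj(log(1 - (1/2-λ)(1-e^{-iθ})))`,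
where `log` is the principal complex logarithm. -/
theorem stmt_14 (lam : ℝ) (h0 : 0 < lam) (h1 : lam < 1 / 2) :
    ∃ δ : ℝ, 0 < δ ∧ ∀ θ : ℝ, |θ| < δ →
      Complex.log (1 - ((1 / 2 : ℂ) + lam) * (1 - Complex.exp (-Complex.I * θ))) =
        -Complex.I * θ +
          (starRingEnd ℂ)
            (Complex.log (1 - ((1 / 2 : ℂ) - lam) * (1 - Complex.exp (-Complex.I * θ)))) :=
  stmt_14_general lam
end

section
/- The power series $\sum_{n=1}^{\infty} a_n x^{2n}$ with coefficients $a_n = \frac{(-1)^n\,(2^{2n}-1)\, B_{2n}}{n\,(2n)!}$ (where $B_{2n}$ is the $2n$-th Bernoulli number) converges to $2\ln(\cos(x/2))$ for every real $x$ with $|x| < \pi$, and its radius of convergence is exactly $\pi$: it diverges for every real $x$ with $|x| > \pi$. -/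
/-!
Taking logarithms in Euler's product `sin (π t) = π t ∏ (1 - t² / n²)` and expanding each
`-log (1 - t² / n²)` as a power series gives, after exchanging the two nonnegative summations,
`-log (sinc (π t)) = ∑ ζ(2m) t^(2m) / m` for `|t| < 1`. Since `sinc x = sinc (x/2) cos (x/2)`,
`2 log (cos (x/2))` is twice the difference of this series at `t = x/(2π)` and `t = x/π`, and
Euler's formula for `ζ(2m)` in terms of `B_{2m}` turns its coefficients into `a_m`.
For divergence, `ζ(2m) ≥ 1` and Bernoulli's inequality bound every term above by
`-(3/2) ((x/π)² - 1)`, which is negative for `|x| > π`.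
-/

open Real Filter Finset Topology

theorem hasSum_fiberwise_swap_of_nonneg {α β : Type*} {f : α × β → ℝ} (hf : 0 ≤ f)
    {a : α → ℝ} {b : β → ℝ} {s : ℝ} (ha : ∀ i, HasSum (fun j => f (i, j)) (a i))
    (hs : HasSum a s) (hb : ∀ j, HasSum (fun i => f (i, j)) (b j)) : HasSum b s := by
  have hsum : Summable f :=
    (summable_prod_of_nonneg hf).mpr
      ⟨fun i => (ha i).summable, hs.summable.congr fun i => (ha i).tsum_eq.symm⟩
  have hf_s : HasSum f s := by
    rw [← (hsum.hasSum.prod_fiberwise ha).unique hs]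
    exact hsum.hasSum
  exact ((Equiv.prodComm β α).hasSum_iff.mpr hf_s).prod_fiberwise hb

/-- `ζ(2m)`; the value at `m = 0` is junk (the series diverges, so `tsum` gives `0`). -/
noncomputable def zetaEven (m : ℕ) : ℝ := ∑' n : ℕ, 1 / ((n : ℝ) + 1) ^ (2 * m)

theorem hasSum_zetaEven_bernoulli {m : ℕ} (hm : m ≠ 0) :
    HasSum (fun n : ℕ => 1 / ((n : ℝ) + 1) ^ (2 * m))
      ((-1 : ℝ) ^ (m + 1) * 2 ^ (2 * m - 1) * π ^ (2 * m) * bernoulli (2 * m) /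
        (2 * m).factorial) := by
  have h := (hasSum_nat_add_iff' 1).mpr (hasSum_zeta_nat hm)
  simpa [zero_pow (by omega : 2 * m ≠ 0)] using h

theorem zetaEven_eq_bernoulli {m : ℕ} (hm : m ≠ 0) :
    zetaEven m = (-1 : ℝ) ^ (m + 1) * 2 ^ (2 * m - 1) * π ^ (2 * m) * bernoulli (2 * m) /
      (2 * m).factorial :=
  (hasSum_zetaEven_bernoulli hm).tsum_eq

theorem hasSum_zetaEven {m : ℕ} (hm : m ≠ 0) :
    HasSum (fun n : ℕ => 1 / ((n : ℝ) + 1) ^ (2 * m)) (zetaEven m) :=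
  (hasSum_zetaEven_bernoulli hm).summable.hasSum

theorem one_le_zetaEven {m : ℕ} (hm : m ≠ 0) : 1 ≤ zetaEven m := by
  simpa using le_hasSum (hasSum_zetaEven hm) 0 fun _ _ => by positivity

theorem Real.sinc_two_mul (x : ℝ) : sinc (2 * x) = sinc x * cos x := by
  rcases eq_or_ne x 0 with rfl | hx
  · simp
  rw [sinc_of_ne_zero hx, sinc_of_ne_zero (by positivity), sin_two_mul]
  field_simp

theorem Real.sinc_pos_of_abs_lt_pi {x : ℝ} (hx : |x| < π) : 0 < sinc x := by
  rcases lt_trichotomy x 0 with h | rfl | h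
  · rw [sinc_of_ne_zero h.ne]
    exact div_pos_of_neg_of_neg (sin_neg_of_neg_of_neg_pi_lt h (by linarith [neg_abs_le x])) h
  · simp
  · rw [sinc_of_ne_zero h.ne']
    exact div_pos (sin_pos_of_pos_of_lt_pi h (lt_of_le_of_lt (le_abs_self x) hx)) h

theorem Real.tendsto_euler_sinc_prod (x : ℝ) :
    Tendsto (fun n : ℕ => ∏ j ∈ range n, (1 - x ^ 2 / ((j : ℝ) + 1) ^ 2)) atTop
      (𝓝 (sinc (π * x))) := by
  rcases eq_or_ne x 0 with rfl | hx
  · simp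
  have hπx : π * x ≠ 0 := mul_ne_zero pi_ne_zero hx
  rw [sinc_of_ne_zero hπx]
  refine ((tendsto_euler_sin_prod x).div_const (π * x)).congr fun n => ?_
  field_simp

theorem sq_div_succ_sq_lt_one {x : ℝ} (hx : |x| < 1) (n : ℕ) :
    x ^ 2 / ((n : ℝ) + 1) ^ 2 < 1 := by
  have hx2 : x ^ 2 < 1 := by simpa using sq_lt_one_iff_abs_lt_one x |>.mpr hx
  rw [div_lt_one (by positivity)]
  nlinarith [(n.cast_nonneg : (0 : ℝ) ≤ n)]

theorem hasSum_neg_log_one_sub_sq_div {x : ℝ} (hx : |x| < 1) :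
    HasSum (fun n : ℕ => -log (1 - x ^ 2 / ((n : ℝ) + 1) ^ 2)) (-log (sinc (π * x))) := by
  have hfactor_pos (n : ℕ) : 0 < 1 - x ^ 2 / ((n : ℝ) + 1) ^ 2 :=
    sub_pos.mpr (sq_div_succ_sq_lt_one hx n)
  have hsinc : 0 < sinc (π * x) := sinc_pos_of_abs_lt_pi <| by
    rw [abs_mul, abs_of_pos pi_pos]; nlinarith [pi_pos]
  rw [hasSum_iff_tendsto_nat_of_nonneg fun n => neg_nonneg.mpr <| log_nonpos (hfactor_pos n).le <|
    sub_le_self _ (by positivity)]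
  refine (((continuousAt_log hsinc.ne').tendsto.comp (tendsto_euler_sinc_prod x)).neg).congr
    fun n => ?_
  rw [Function.comp_apply, log_prod fun j _ => (hfactor_pos j).ne', sum_neg_distrib]

theorem hasSum_neg_log_sinc_pi_mul {x : ℝ} (hx : |x| < 1) :
    HasSum (fun k : ℕ => zetaEven (k + 1) * x ^ (2 * (k + 1)) / (k + 1))
      (-log (sinc (π * x))) := by
  refine hasSum_fiberwise_swap_of_nonneg
    (f := fun p : ℕ × ℕ => (x ^ 2 / ((p.1 : ℝ) + 1) ^ 2) ^ (p.2 + 1) / (p.2 + 1))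
    (fun p => by positivity) (fun n => ?_) (hasSum_neg_log_one_sub_sq_div hx) fun k => ?_
  · have hy : |x ^ 2 / ((n : ℝ) + 1) ^ 2| < 1 := by
      rw [abs_of_nonneg (by positivity)]
      exact sq_div_succ_sq_lt_one hx n
    simpa using hasSum_pow_div_log_of_abs_lt_one hy
  · rw [mul_comm, mul_div_right_comm]
    refine ((hasSum_zetaEven (m := k + 1) (by omega)).mul_left _).congr_fun fun n => ?_
    dsimp only
    rw [div_pow, ← pow_mul, ← pow_mul]
    ring

/-- The paper's `a_{n+1}`. -/
noncomputable def logCosCoeff (n : ℕ) : ℝ :=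
  (-1) ^ (n + 1) * ((2 : ℝ) ^ (2 * (n + 1)) - 1) * ((bernoulli (2 * (n + 1)) : ℚ) : ℝ) /
    (((n : ℝ) + 1) * ((2 * (n + 1)).factorial : ℝ))

theorem logCosCoeff_mul_pow (n : ℕ) (x : ℝ) :
    logCosCoeff n * x ^ (2 * (n + 1)) =
      2 * (zetaEven (n + 1) * (x / (2 * π)) ^ (2 * (n + 1)) / (n + 1) -
        zetaEven (n + 1) * (x / π) ^ (2 * (n + 1)) / (n + 1)) := by
  rw [logCosCoeff, zetaEven_eq_bernoulli (m := n + 1) (by omega),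
    show 2 * (n + 1) - 1 = 2 * n + 1 by omega]
  simp only [div_pow, mul_pow]
  field_simp
  ring

theorem hasSum_logCosCoeff_mul_pow {x : ℝ} (hx : |x| < π) :
    HasSum (fun n : ℕ => logCosCoeff n * x ^ (2 * (n + 1))) (2 * log (cos (x / 2))) := by
  have hhalf := hasSum_neg_log_sinc_pi_mul (x := x / (2 * π)) <| by
    rw [abs_div, abs_of_pos two_pi_pos, div_lt_one two_pi_pos]; linarith [pi_pos]
  have hfull := hasSum_neg_log_sinc_pi_mul (x := x / π) <| by
    rwa [abs_div, abs_of_pos pi_pos, div_lt_one pi_pos]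
  rw [show π * (x / (2 * π)) = x / 2 by field_simp] at hhalf
  rw [show π * (x / π) = x by field_simp] at hfull
  have hcos : 0 < cos (x / 2) :=
    cos_pos_of_mem_Ioo ⟨by linarith [neg_abs_le x], by linarith [le_abs_self x]⟩
  have hsinc : 0 < sinc (x / 2) := sinc_pos_of_abs_lt_pi <| by
    rw [abs_div, abs_two]; linarith [abs_nonneg x]
  have hlog : 2 * (-log (sinc (x / 2)) - -log (sinc x)) = 2 * log (cos (x / 2)) := by
    rw [show x = 2 * (x / 2) by ring, sinc_two_mul, log_mul hsinc.ne' hcos.ne']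
    ring_nf
  rw [← hlog]
  simpa only [logCosCoeff_mul_pow] using (hhalf.sub hfull).mul_left 2

theorem logCosCoeff_mul_pow_le (n : ℕ) (x : ℝ) :
    logCosCoeff n * x ^ (2 * (n + 1)) ≤ -(3 / 2) * ((x / π) ^ 2 - 1) := by
  set ρ := (x / π) ^ 2 with hρ
  set P := ρ ^ (n + 1) / (n + 1)
  have hgrowth : ρ - 1 ≤ P := by
    rw [le_div_iff₀ (by positivity)]
    have := one_add_mul_le_pow (a := ρ - 1) (by nlinarith [sq_nonneg (x / π)]) (n + 1)
    rw [add_sub_cancel] at this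
    push_cast at this
    linarith
  have hquarter : 3 / 4 ≤ 1 - 1 / (4 : ℝ) ^ (n + 1) := by
    have : (1 : ℝ) / 4 ^ (n + 1) ≤ 1 / 4 :=
      one_div_le_one_div_of_le (by norm_num) (le_self_pow₀ (by norm_num) (by omega))
    linarith
  have hterm : logCosCoeff n * x ^ (2 * (n + 1)) =
      -(2 * zetaEven (n + 1) * (1 - 1 / 4 ^ (n + 1)) * P) := by
    have hhalf : (x / (2 * π)) ^ 2 = ρ / 4 := by
      rw [hρ]
      field_simp
      norm_num
    rw [logCosCoeff_mul_pow, pow_mul, pow_mul, hhalf, div_pow]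
    ring
  suffices 3 / 2 * (ρ - 1) ≤ 2 * zetaEven (n + 1) * (1 - 1 / 4 ^ (n + 1)) * P by linarith
  have hzeta := one_le_zetaEven (m := n + 1) (by omega)
  calc 3 / 2 * (ρ - 1) ≤ 2 * 1 * (3 / 4) * P := by linarith
    _ ≤ 2 * zetaEven (n + 1) * (1 - 1 / 4 ^ (n + 1)) * P := by gcongr

theorem not_summable_logCosCoeff_mul_pow {x : ℝ} (hx : π < |x|) :
    ¬ Summable (fun n : ℕ => logCosCoeff n * x ^ (2 * (n + 1))) := by
  intro hsum
  have hρ : 1 < (x / π) ^ 2 := by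
    rw [div_pow, one_lt_div (by positivity), ← sq_abs x]
    nlinarith [pi_pos]
  have := le_of_tendsto' hsum.tendsto_atTop_zero fun n => logCosCoeff_mul_pow_le n x
  linarith

/-- Appendix A, `λ₂ = 1/4`: the series `∑_{n≥1} a_n x^{2n}` with
`a_n = (-1)^n (2^{2n}-1) B_{2n} / (n (2n)!)` converges to `2 ln(cos(x/2))` for
`|x| < π`, and it diverges for `|x| > π` (so its radius of convergence is exactly `π`). -/
theorem stmt_18 :
    (∀ x : ℝ, |x| < Real.pi →
      HasSum (fun n : ℕ =>
        ((-1) ^ (n + 1) * ((2 : ℝ) ^ (2 * (n + 1)) - 1) *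
            ((bernoulli (2 * (n + 1)) : ℚ) : ℝ) /
          (((n : ℝ) + 1) * ((2 * (n + 1)).factorial : ℝ))) * x ^ (2 * (n + 1)))
        (2 * Real.log (Real.cos (x / 2)))) ∧
    (∀ x : ℝ, Real.pi < |x| →
      ¬ Summable (fun n : ℕ =>
        ((-1) ^ (n + 1) * ((2 : ℝ) ^ (2 * (n + 1)) - 1) *
            ((bernoulli (2 * (n + 1)) : ℚ) : ℝ) /
          (((n : ℝ) + 1) * ((2 * (n + 1)).factorial : ℝ))) * x ^ (2 * (n + 1)))) :=
  ⟨fun _ hx => hasSum_logCosCoeff_mul_pow hx, fun _ hx => not_summable_logCosCoeff_mul_pow hx⟩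
end
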